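/- With the notation of the context, for each R ∈ {∅, U, V, U∪V} one has ℳ_ℤ(R) = ℳ_ℝ(R) ∩ ℤ²: every integer point of the real maculate region is the image under π of an integer vector with coordinates ≤ −1 on R and ≥ 0 off R. -/

import Mathlib

open scoped BigOperators

/-- The class map `π : ℝ^{ℓ₁} × ℝ^{ℓ₂} → ℝ²` for the Picard-rank-2 data `(ℓ₁, ℓ₂, c)`. -/
noncomputable def picTwoPiR (ℓ₁ ℓ₂ : ℕ) (c : Fin ℓ₂ → ℤ)
    (x : Fin ℓ₁ ⊕ Fin ℓ₂ → ℝ) : ℝ × ℝ :=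
  ((∑ i, x (Sum.inl i)) + ∑ j, (c j : ℝ) * x (Sum.inr j), ∑ j, x (Sum.inr j))

/-- The integral class map `π : ℤ^{ℓ₁} × ℤ^{ℓ₂} → ℤ²`. -/
def picTwoPiZ (ℓ₁ ℓ₂ : ℕ) (c : Fin ℓ₂ → ℤ)
    (x : Fin ℓ₁ ⊕ Fin ℓ₂ → ℤ) : ℤ × ℤ :=
  ((∑ i, x (Sum.inl i)) + ∑ j, c j * x (Sum.inr j), ∑ j, x (Sum.inr j))

/-- The real maculate region `ℳ_ℝ(R)`. -/
noncomputable def picTwoMacR (ℓ₁ ℓ₂ : ℕ) (c : Fin ℓ₂ → ℤ)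
    (R : Set (Fin ℓ₁ ⊕ Fin ℓ₂)) : Set (ℝ × ℝ) :=
  picTwoPiR ℓ₁ ℓ₂ c '' {x | (∀ ρ ∈ R, x ρ ≤ -1) ∧ ∀ ρ ∉ R, 0 ≤ x ρ}

/-- The integral maculate set `ℳ_ℤ(R)`. -/
def picTwoMacZ (ℓ₁ ℓ₂ : ℕ) (c : Fin ℓ₂ → ℤ)
    (R : Set (Fin ℓ₁ ⊕ Fin ℓ₂)) : Set (ℤ × ℤ) :=
  picTwoPiZ ℓ₁ ℓ₂ c '' {x | (∀ ρ ∈ R, x ρ ≤ -1) ∧ ∀ ρ ∉ R, 0 ≤ x ρ}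

/-!
After reflecting the coordinates in `R` (`x ↦ -1 - x`), the region `ℳ(R)` becomes a translate
of the cone spanned by the signed columns `±π(e_ρ)` of `π`, and the translation vector is
integral. In each of the four cases two of these columns form a ℤ-basis of `ℤ²` and span the
whole cone, so every lattice point of the cone is a non-negative integral combination of them:
its coordinates in that basis are integers by Cramer's rule and non-negative because they are
determinants against the two edges of the cone. With columns `(1, 0)` on `U` and `(c^j, 1)`
on `V`, the edges are `±(1, 0)` and `±(c^{ℓ₂}, 1)` for `R = ∅, U ∪ V` (as `c` is antitone) and
`±(1, 0)`, `±(0, 1) = ±(c^1, 1)` for `R = U, V` (as `c ≤ c^1 = 0`).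
-/

open Finset

def cross (p q : ℤ × ℤ) : ℤ := p.1 * q.2 - p.2 * q.1

/-- `g α`, `g β` is a positively oriented ℤ-basis of `ℤ²` whose cone contains every `g ρ`. -/
def UnimodularConeBasis {ι : Type*} (g : ι → ℤ × ℤ) (α β : ι) : Prop :=
  cross (g α) (g β) = 1 ∧ (∀ ρ, 0 ≤ cross (g α) (g ρ)) ∧ ∀ ρ, 0 ≤ cross (g ρ) (g β)

section Cone

variable {ι : Type*} [Fintype ι]

lemma UnimodularConeBasis.exists_nonneg_int_comb {g : ι → ℤ × ℤ} {α β : ι}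
    (hg : UnimodularConeBasis g α β) {p : ℤ × ℤ} {y : ι → ℝ} (hy : ∀ ρ, 0 ≤ y ρ)
    (hp₁ : (p.1 : ℝ) = ∑ ρ, y ρ * (g ρ).1) (hp₂ : (p.2 : ℝ) = ∑ ρ, y ρ * (g ρ).2) :
    ∃ n : ι → ℤ, 0 ≤ n ∧ ∑ ρ, n ρ • g ρ = p := by
  classical
  obtain ⟨hαβ, hα, hβ⟩ := hg
  have hu : 0 ≤ cross p (g β) := by
    have : (cross p (g β) : ℝ) = ∑ ρ, y ρ * cross (g ρ) (g β) := by
      simp only [cross, Int.cast_sub, Int.cast_mul, hp₁, hp₂, sum_mul, ← sum_sub_distrib]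
      exact sum_congr rfl fun ρ _ => by ring
    exact_mod_cast this ▸ sum_nonneg fun ρ _ => mul_nonneg (hy ρ) (by exact_mod_cast hβ ρ)
  have hv : 0 ≤ cross (g α) p := by
    have : (cross (g α) p : ℝ) = ∑ ρ, y ρ * cross (g α) (g ρ) := by
      simp only [cross, Int.cast_sub, Int.cast_mul, hp₁, hp₂, mul_sum, ← sum_sub_distrib]
      exact sum_congr rfl fun ρ _ => by ring
    exact_mod_cast this ▸ sum_nonneg fun ρ _ => mul_nonneg (hy ρ) (by exact_mod_cast hα ρ)
  refine ⟨Pi.single α (cross p (g β)) + Pi.single β (cross (g α) p),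
    add_nonneg (Pi.single_nonneg.2 hu) (Pi.single_nonneg.2 hv), ?_⟩
  simp only [Pi.add_apply, add_smul, sum_add_distrib, Fintype.sum_single_smul]
  unfold cross at hαβ ⊢
  ext
  · simp
    linear_combination p.1 * hαβ
  · simp
    linear_combination p.2 * hαβ

open Classical in
noncomputable def signedCols (col : ι → ℤ × ℤ) (R : Set ι) : ι → ℤ × ℤ :=
  fun ρ => if ρ ∈ R then -col ρ else col ρ

lemma exists_int_of_unimodularConeBasis_signedCols {col : ι → ℤ × ℤ} {R : Set ι} {α β : ι}
    (hg : UnimodularConeBasis (signedCols col R) α β) {p : ℤ × ℤ} {x : ι → ℝ}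
    (hxR : ∀ ρ ∈ R, x ρ ≤ -1) (hxRc : ∀ ρ ∉ R, 0 ≤ x ρ)
    (hp₁ : (p.1 : ℝ) = ∑ ρ, x ρ * (col ρ).1) (hp₂ : (p.2 : ℝ) = ∑ ρ, x ρ * (col ρ).2) :
    ∃ n : ι → ℤ, ((∀ ρ ∈ R, n ρ ≤ -1) ∧ ∀ ρ ∉ R, 0 ≤ n ρ) ∧ ∑ ρ, n ρ • col ρ = p := by
  classical
  -- `x ρ • col ρ = y ρ • signedCols col R ρ - (if ρ ∈ R then col ρ else 0)`
  set s : ℤ × ℤ := ∑ ρ, if ρ ∈ R then col ρ else 0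
  set y : ι → ℝ := fun ρ => if ρ ∈ R then -1 - x ρ else x ρ
  have hy : ∀ ρ, 0 ≤ y ρ := fun ρ => by
    by_cases h : ρ ∈ R
    · simp only [y, if_pos h]; linarith [hxR ρ h]
    · simpa [y, h] using hxRc ρ h
  have h₁ : ((p + s).1 : ℝ) = ∑ ρ, y ρ * (signedCols col R ρ).1 := by
    simp only [s, Prod.fst_add, Prod.fst_sum, Int.cast_add, Int.cast_sum, hp₁, ← sum_add_distrib]
    refine sum_congr rfl fun ρ _ => ?_
    by_cases h : ρ ∈ R
    · simp [y, signedCols, h]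
      ring
    · simp [y, signedCols, h]
  have h₂ : ((p + s).2 : ℝ) = ∑ ρ, y ρ * (signedCols col R ρ).2 := by
    simp only [s, Prod.snd_add, Prod.snd_sum, Int.cast_add, Int.cast_sum, hp₂, ← sum_add_distrib]
    refine sum_congr rfl fun ρ _ => ?_
    by_cases h : ρ ∈ R
    · simp [y, signedCols, h]
      ring
    · simp [y, signedCols, h]
  obtain ⟨n, hn, hnp⟩ := hg.exists_nonneg_int_comb hy h₁ h₂
  refine ⟨fun ρ => if ρ ∈ R then -1 - n ρ else n ρ,
    ⟨fun ρ h => by simpa [h] using hn ρ, fun ρ h => by simpa [h] using hn ρ⟩, ?_⟩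
  rw [← add_sub_cancel_right p s, ← hnp, ← sum_sub_distrib]
  refine sum_congr rfl fun ρ _ => ?_
  by_cases h : ρ ∈ R
  · simp [signedCols, h]
    ring
  · simp [signedCols, h]

end Cone

section PicTwo

variable {ℓ₁ ℓ₂ : ℕ} {c : Fin ℓ₂ → ℤ}

def picTwoCol (ℓ₁ ℓ₂ : ℕ) (c : Fin ℓ₂ → ℤ) : Fin ℓ₁ ⊕ Fin ℓ₂ → ℤ × ℤ :=
  Sum.elim (fun _ => (1, 0)) fun j => (c j, 1)

lemma picTwoPiZ_eq_sum (x : Fin ℓ₁ ⊕ Fin ℓ₂ → ℤ) :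
    picTwoPiZ ℓ₁ ℓ₂ c x = ∑ ρ, x ρ • picTwoCol ℓ₁ ℓ₂ c ρ := by
  ext <;>
    simp [picTwoPiZ, picTwoCol, Fintype.sum_sum_type, Prod.fst_sum, Prod.snd_sum, mul_comm]

lemma picTwoPiR_fst (x : Fin ℓ₁ ⊕ Fin ℓ₂ → ℝ) :
    (picTwoPiR ℓ₁ ℓ₂ c x).1 = ∑ ρ, x ρ * (picTwoCol ℓ₁ ℓ₂ c ρ).1 := by
  simp [picTwoPiR, picTwoCol, Fintype.sum_sum_type, mul_comm]

lemma picTwoPiR_snd (x : Fin ℓ₁ ⊕ Fin ℓ₂ → ℝ) :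
    (picTwoPiR ℓ₁ ℓ₂ c x).2 = ∑ ρ, x ρ * (picTwoCol ℓ₁ ℓ₂ c ρ).2 := by
  simp [picTwoPiR, picTwoCol, Fintype.sum_sum_type]

lemma cast_mem_picTwoMacR {R : Set (Fin ℓ₁ ⊕ Fin ℓ₂)} {p : ℤ × ℤ}
    (hp : p ∈ picTwoMacZ ℓ₁ ℓ₂ c R) : ((p.1 : ℝ), (p.2 : ℝ)) ∈ picTwoMacR ℓ₁ ℓ₂ c R := by
  obtain ⟨x, ⟨hxR, hxRc⟩, rfl⟩ := hp
  refine ⟨fun ρ => x ρ, ⟨fun ρ h => show (x ρ : ℝ) ≤ -1 by exact_mod_cast hxR ρ h,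
    fun ρ h => show (0 : ℝ) ≤ x ρ by exact_mod_cast hxRc ρ h⟩, ?_⟩
  simp [picTwoPiR, picTwoPiZ]

lemma mem_picTwoMacZ_iff_cast_mem {R : Set (Fin ℓ₁ ⊕ Fin ℓ₂)} {α β : Fin ℓ₁ ⊕ Fin ℓ₂}
    (hg : UnimodularConeBasis (signedCols (picTwoCol ℓ₁ ℓ₂ c) R) α β) (p : ℤ × ℤ) :
    p ∈ picTwoMacZ ℓ₁ ℓ₂ c R ↔ ((p.1 : ℝ), (p.2 : ℝ)) ∈ picTwoMacR ℓ₁ ℓ₂ c R := by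
  refine ⟨cast_mem_picTwoMacR, fun ⟨x, ⟨hxR, hxRc⟩, hx⟩ => ?_⟩
  obtain ⟨n, hn, hnp⟩ := exists_int_of_unimodularConeBasis_signedCols hg hxR hxRc
    (by rw [← picTwoPiR_fst, hx]) (by rw [← picTwoPiR_snd, hx])
  exact ⟨n, hn, by rw [picTwoPiZ_eq_sum, hnp]⟩

lemma unimodularConeBasis_empty (hℓ₁ : 0 < ℓ₁) (hℓ₂ : 0 < ℓ₂) (hmono : Antitone c) :
    UnimodularConeBasis (signedCols (picTwoCol ℓ₁ ℓ₂ c) ∅)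
      (Sum.inl ⟨0, hℓ₁⟩) (Sum.inr ⟨ℓ₂ - 1, by omega⟩) := by
  have hlast : ∀ j, c ⟨ℓ₂ - 1, by omega⟩ ≤ c j := fun j =>
    hmono (Fin.le_def.2 (Nat.le_sub_one_of_lt j.isLt))
  refine ⟨by simp [cross, signedCols, picTwoCol], ?_, ?_⟩ <;> rintro (i | j) <;>
    simp [cross, signedCols, picTwoCol, hlast]

lemma unimodularConeBasis_range_inl (hℓ₁ : 0 < ℓ₁) (hℓ₂ : 0 < ℓ₂) (hc0 : c ⟨0, hℓ₂⟩ = 0)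
    (hmono : Antitone c) :
    UnimodularConeBasis (signedCols (picTwoCol ℓ₁ ℓ₂ c) (Set.range Sum.inl))
      (Sum.inr ⟨0, hℓ₂⟩) (Sum.inl ⟨0, hℓ₁⟩) := by
  have hnonpos : ∀ j, c j ≤ 0 := fun j => hc0 ▸ hmono (Fin.le_def.2 (Nat.zero_le _))
  refine ⟨by simp [cross, signedCols, picTwoCol, hc0], ?_, ?_⟩ <;> rintro (i | j) <;>
    simp [cross, signedCols, picTwoCol, hc0, hnonpos]

lemma unimodularConeBasis_range_inr (hℓ₁ : 0 < ℓ₁) (hℓ₂ : 0 < ℓ₂) (hc0 : c ⟨0, hℓ₂⟩ = 0)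
    (hmono : Antitone c) :
    UnimodularConeBasis (signedCols (picTwoCol ℓ₁ ℓ₂ c) (Set.range Sum.inr))
      (Sum.inr ⟨0, hℓ₂⟩) (Sum.inl ⟨0, hℓ₁⟩) := by
  have hnonpos : ∀ j, c j ≤ 0 := fun j => hc0 ▸ hmono (Fin.le_def.2 (Nat.zero_le _))
  refine ⟨by simp [cross, signedCols, picTwoCol, hc0], ?_, ?_⟩ <;> rintro (i | j) <;>
    simp [cross, signedCols, picTwoCol, hc0, hnonpos]

lemma unimodularConeBasis_range_inl_union_range_inr (hℓ₁ : 0 < ℓ₁) (hℓ₂ : 0 < ℓ₂)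
    (hmono : Antitone c) :
    UnimodularConeBasis (signedCols (picTwoCol ℓ₁ ℓ₂ c) (Set.range Sum.inl ∪ Set.range Sum.inr))
      (Sum.inl ⟨0, hℓ₁⟩) (Sum.inr ⟨ℓ₂ - 1, by omega⟩) := by
  have hlast : ∀ j, c ⟨ℓ₂ - 1, by omega⟩ ≤ c j := fun j =>
    hmono (Fin.le_def.2 (Nat.le_sub_one_of_lt j.isLt))
  refine ⟨by simp [cross, signedCols, picTwoCol], ?_, ?_⟩ <;> rintro (i | j) <;>
    simp [cross, signedCols, picTwoCol, hlast]

end PicTwo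

/-- For each of the four tempting subsets `R ∈ {∅, U, V, U ∪ V}`, one has
`ℳ_ℤ(R) = ℳ_ℝ(R) ∩ ℤ²`: an integer point lies in the integral maculate set
iff its image in `ℝ²` lies in the real maculate region. -/
theorem statement9 (ℓ₁ ℓ₂ : ℕ) (h1 : 2 ≤ ℓ₁) (h2 : 2 ≤ ℓ₂)
    (c : Fin ℓ₂ → ℤ) (hc0 : c ⟨0, by omega⟩ = 0) (hmono : Antitone c) :
    ∀ R ∈ ({∅, Set.range Sum.inl, Set.range Sum.inr,
            Set.range Sum.inl ∪ Set.range Sum.inr} :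
              Set (Set (Fin ℓ₁ ⊕ Fin ℓ₂))),
      ∀ p : ℤ × ℤ,
        p ∈ picTwoMacZ ℓ₁ ℓ₂ c R ↔
          ((p.1 : ℝ), (p.2 : ℝ)) ∈ picTwoMacR ℓ₁ ℓ₂ c R := by
  have hℓ₁ : 0 < ℓ₁ := by omega
  have hℓ₂ : 0 < ℓ₂ := by omega
  rintro R (rfl | rfl | rfl | rfl)
  · exact mem_picTwoMacZ_iff_cast_mem (unimodularConeBasis_empty hℓ₁ hℓ₂ hmono)
  · exact mem_picTwoMacZ_iff_cast_mem (unimodularConeBasis_range_inl hℓ₁ hℓ₂ hc0 hmono)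
  · exact mem_picTwoMacZ_iff_cast_mem (unimodularConeBasis_range_inr hℓ₁ hℓ₂ hc0 hmono)
  · exact mem_picTwoMacZ_iff_cast_mem
      (unimodularConeBasis_range_inl_union_range_inr hℓ₁ hℓ₂ hmono)
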